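/- arXiv:1702.06866 — 2 statements merged into one kernel-verified Lean document; each statement's English description precedes it below -/
import Mathlib

section
/- In a standard gambling game, the family {v_λ : λ ∈ (0,1]} of discounted values is equicontinuous on X×Y; more precisely, if ω is a concave, nondecreasing modulus of continuity of u (i.e. |u(x,y) − u(x',y')| ≤ ω(d(x,x') + d(y,y')) for all x,x' ∈ X and y,y' ∈ Y, with ω(t) → 0 as t → 0), then every v_λ satisfies |v_λ(x,y) − v_λ(x',y')| ≤ ω(d(x,x') + d(y,y')) for all x,x' ∈ X and y,y' ∈ Y. -/
open MeasureTheory Set Filter Topology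

noncomputable section
namespace GG

abbrev PM (S : Type*) [MeasurableSpace S] := MeasureTheory.ProbabilityMeasure S

variable {S : Type*} [MeasurableSpace S]

/-- Dirac probability measure. -/
def dirac (s : S) : PM S := ⟨MeasureTheory.Measure.dirac s, inferInstance⟩

/-- Integral of a function against a probability measure (the affine extension `f̃`). -/
def iPM (f : S → ℝ) (p : PM S) : ℝ := ∫ s, f s ∂(p : MeasureTheory.Measure S)

/-- `r` is the mixture `t p + (1-t) q`. -/
def IsMix (t : NNReal) (p q r : PM S) : Prop :=
  (r : MeasureTheory.Measure S)
    = (t : ENNReal) • (p : MeasureTheory.Measure S)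
      + ((1 : ENNReal) - (t : ENNReal)) • (q : MeasureTheory.Measure S)

/-- Convexity of a set of probability measures. -/
def PMConvex (A : Set (PM S)) : Prop :=
  ∀ p ∈ A, ∀ q ∈ A, ∀ t : NNReal, t ≤ 1 → ∀ r : PM S, IsMix t p q r → r ∈ A

/-- Convexity of a set of pairs of probability measures. -/
def PMConvex2 (A : Set (PM S × PM S)) : Prop :=
  ∀ a ∈ A, ∀ b ∈ A, ∀ t : NNReal, t ≤ 1 → ∀ c : PM S × PM S,
    IsMix t a.1 b.1 c.1 → IsMix t a.2 b.2 c.2 → c ∈ A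

/-- Convex hull of a set of probability measures. -/
def convexHullPM (A : Set (PM S)) : Set (PM S) := ⋂₀ {T | A ⊆ T ∧ PMConvex T}

/-- Convex hull of a set of pairs of probability measures. -/
def convexHull2 (A : Set (PM S × PM S)) : Set (PM S × PM S) := ⋂₀ {T | A ⊆ T ∧ PMConvex2 T}

/-- Kantorovich–Rubinstein distance. -/
def dKR {S : Type*} [MeasurableSpace S] [PseudoMetricSpace S] (p q : PM S) : ℝ :=
  sSup {r | ∃ f : S → ℝ, LipschitzWith 1 f ∧ r = |iPM f p - iPM f q|}

def argmaxOn {α : Type*} (f : α → ℝ) (A : Set α) : Set α := {p ∈ A | ∀ q ∈ A, f q ≤ f p}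

def argminOn {α : Type*} (f : α → ℝ) (A : Set α) : Set α := {p ∈ A | ∀ q ∈ A, f p ≤ f q}

section Topo

variable [TopologicalSpace S] [OpensMeasurableSpace S]

/-- Graph of the linear extension `Γ̃`: the closed convex hull of the graph of `Γ`. -/
def tGraph (Γ : S → Set (PM S)) : Set (PM S × PM S) :=
  closure (convexHull2 {z | ∃ x : S, z.1 = dirac x ∧ z.2 ∈ Γ x})

/-- The linear extension `Γ̃ : Δ(S) ⇉ Δ(S)`. -/
def tStep (Γ : S → Set (PM S)) (p : PM S) : Set (PM S) := {q | (p, q) ∈ tGraph Γ}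

/-- Iterates `Γ̃ⁿ`, with `Γ̃⁰(p) = {p}` and `Γ̃^{n+1} = Γ̃ⁿ ∘ Γ̃`. -/
def tIter (Γ : S → Set (PM S)) : ℕ → PM S → Set (PM S)
  | 0, p => {p}
  | n + 1, p => {r | ∃ q ∈ tStep Γ p, r ∈ tIter Γ n q}

/-- The reachable set `Γ^∞(x)`: closure of `⋃ₙ Γ̃ⁿ(δ_x)`. -/
def reach (Γ : S → Set (PM S)) (x : S) : Set (PM S) :=
  closure (⋃ n : ℕ, tIter Γ n (dirac x))

/-- There is a bounded measurable lower semicontinuous `φ` whose (expectation) argmax over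
`R x` is exactly `{δ_x}`, for every `x`. -/
def AcyclicFor (R : S → Set (PM S)) : Prop :=
  ∃ φ : S → ℝ, Measurable φ ∧ (∃ C : ℝ, ∀ s, |φ s| ≤ C) ∧ LowerSemicontinuous φ ∧
    ∀ x : S, argmaxOn (iPM φ) (R x) = {dirac x}

/-- There is a bounded measurable upper semicontinuous `ψ` whose (expectation) argmin over
`R y` is exactly `{δ_y}`, for every `y`. -/
def AcyclicForMin (R : S → Set (PM S)) : Prop :=
  ∃ ψ : S → ℝ, Measurable ψ ∧ (∃ C : ℝ, ∀ s, |ψ s| ≤ C) ∧ UpperSemicontinuous ψ ∧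
    ∀ y : S, argminOn (iPM ψ) (R y) = {dirac y}

end Topo

section TwoPlayers

variable {X Y : Type*} [MeasurableSpace X] [MeasurableSpace Y]

/-- The bi-affine extension `ṽ(p,q) = ∫∫ v dp dq`. -/
def iXY (v : X × Y → ℝ) (p : PM X) (q : PM Y) : ℝ :=
  ∫ x, ∫ y, v (x, y) ∂(q : MeasureTheory.Measure Y) ∂(p : MeasureTheory.Measure X)

/-- `v` is excessive: `v(x,y) = max_{p ∈ Γ(x)} ṽ(p,y)`. -/
def Excessive (Γ : X → Set (PM X)) (v : X × Y → ℝ) : Prop :=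
  ∀ x : X, ∀ y : Y, IsGreatest ((fun p => iXY v p (dirac y)) '' Γ x) (v (x, y))

/-- `v` is depressive: `v(x,y) = min_{q ∈ Λ(y)} ṽ(x,q)`. -/
def Depressive (Λ : Y → Set (PM Y)) (v : X × Y → ℝ) : Prop :=
  ∀ x : X, ∀ y : Y, IsLeast ((fun q => iXY v (dirac x) q) '' Λ y) (v (x, y))

/-- `v` is balanced: `v(x,y) = max_{p ∈ Γ(x)} min_{q ∈ Λ(y)} ṽ(p,q)
    = min_{q ∈ Λ(y)} max_{p ∈ Γ(x)} ṽ(p,q)`. -/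
def Balanced (Γ : X → Set (PM X)) (Λ : Y → Set (PM Y)) (v : X × Y → ℝ) : Prop :=
  ∀ x : X, ∀ y : Y,
    IsGreatest {r | ∃ p ∈ Γ x, IsLeast (iXY v p '' Λ y) r} (v (x, y)) ∧
    IsLeast {r | ∃ q ∈ Λ y, IsGreatest ((fun p => iXY v p q) '' Γ x) r} (v (x, y))

variable [TopologicalSpace X] [OpensMeasurableSpace X] [TopologicalSpace Y] [OpensMeasurableSpace Y]

/-- Property P1: for all `(x,y)` there is `p ∈ Γ^∞(x)` with `v(x,y) = ṽ(p,y) ≤ ũ(p,y)`. -/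
def P1 (Γ : X → Set (PM X)) (u v : X × Y → ℝ) : Prop :=
  ∀ x : X, ∀ y : Y, ∃ p ∈ reach Γ x,
    v (x, y) = iXY v p (dirac y) ∧ iXY v p (dirac y) ≤ iXY u p (dirac y)

/-- Property P2: for all `(x,y)` there is `q ∈ Λ^∞(y)` with `v(x,y) = ṽ(x,q) ≥ ũ(x,q)`. -/
def P2 (Λ : Y → Set (PM Y)) (u v : X × Y → ℝ) : Prop :=
  ∀ x : X, ∀ y : Y, ∃ q ∈ reach Λ y,
    v (x, y) = iXY v (dirac x) q ∧ iXY u (dirac x) q ≤ iXY v (dirac x) q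

/-- `w` satisfies the Shapley fixed point equation for discount factor `lam`:
`w(x,y) = max_{p∈Γ(x)} min_{q∈Λ(y)} (λ u(x,y) + (1-λ) w̃(p,q))
        = min_{q∈Λ(y)} max_{p∈Γ(x)} (λ u(x,y) + (1-λ) w̃(p,q))`. -/
def ShapleyEq (Γ : X → Set (PM X)) (Λ : Y → Set (PM Y)) (u : X × Y → ℝ)
    (lam : ℝ) (w : X × Y → ℝ) : Prop :=
  ∀ x : X, ∀ y : Y,
    IsGreatest {r | ∃ p ∈ Γ x,
      IsLeast ((fun q => lam * u (x, y) + (1 - lam) * iXY w p q) '' Λ y) r} (w (x, y)) ∧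
    IsLeast {r | ∃ q ∈ Λ y,
      IsGreatest ((fun p => lam * u (x, y) + (1 - lam) * iXY w p q) '' Γ x) r} (w (x, y))

end TwoPlayers

/-- A standard gambling game: compact metric state spaces, continuous payoff,
continuous transition multifunctions with nonempty convex compact values,
leavable and non expansive. -/
structure StdGame (X Y : Type*) [MetricSpace X] [MeasurableSpace X] [OpensMeasurableSpace X]
    [MetricSpace Y] [MeasurableSpace Y] [OpensMeasurableSpace Y] where
  G : X → Set (PM X)
  L : Y → Set (PM Y)
  u : X × Y → ℝ
  u_cont : Continuous u
  G_ne : ∀ x, (G x).Nonempty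
  G_cvx : ∀ x, PMConvex (G x)
  G_cpt : ∀ x, IsCompact (G x)
  G_cont : ∀ ε : ℝ, 0 < ε → ∃ α : ℝ, 0 < α ∧ ∀ x x' : X, dist x x' ≤ α →
    ∀ p ∈ G x, ∃ p' ∈ G x', dKR p p' ≤ ε
  G_leav : ∀ x, dirac x ∈ G x
  G_nonexp : ∀ x x' : X, ∀ p ∈ G x, ∃ p' ∈ G x', dKR p p' ≤ dist x x'
  L_ne : ∀ y, (L y).Nonempty
  L_cvx : ∀ y, PMConvex (L y)
  L_cpt : ∀ y, IsCompact (L y)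
  L_cont : ∀ ε : ℝ, 0 < ε → ∃ α : ℝ, 0 < α ∧ ∀ y y' : Y, dist y y' ≤ α →
    ∀ q ∈ L y, ∃ q' ∈ L y', dKR q q' ≤ ε
  L_leav : ∀ y, dirac y ∈ L y
  L_nonexp : ∀ y y' : Y, ∀ q ∈ L y, ∃ q' ∈ L y', dKR q q' ≤ dist y y'

end GG

/-!
Let `M` be the largest excess `w(x,y) - w(x',y') - ω(d(x,x') + d(y,y'))`. Majorizing the concave,
nondecreasing `ω` by a secant line `c + L t` that is tight near a given distance turns
`w ≤ M + ω` into an `L`-Lipschitz bound up to the constant `M + c`, and comparing `w` with its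
inf-convolution shows that the bi-affine extension `w̃` obeys the same bound with
Kantorovich–Rubinstein distances in place of `d`. By non-expansiveness each player can answer
from `x'` (resp. `y`) at transport distance at most `d(x,x')` (resp. `d(y,y')`) a move that is
optimal from `x` (resp. `y'`), so the Shapley equation yields an excess of at most `(1 - λ) M`,
and hence `M ≤ 0`.
-/

open scoped NNReal

namespace GG

section KantorovichRubinstein

variable {S : Type*} [MetricSpace S] [CompactSpace S] [MeasurableSpace S] [BorelSpace S]

lemma integrable_of_continuous {f : S → ℝ} (hf : Continuous f) (p : PM S) :
    Integrable f (p : Measure S) :=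
  hf.integrable_of_hasCompactSupport (HasCompactSupport.of_compactSpace f)

omit [MetricSpace S] [CompactSpace S] [BorelSpace S] in
@[simp]
lemma iPM_const (c : ℝ) (p : PM S) : iPM (fun _ => c) p = c := by
  simp [iPM]

lemma iPM_le_iPM_add {f g : S → ℝ} (hf : Continuous f) (hg : Continuous g) {c : ℝ}
    (h : ∀ s, f s ≤ g s + c) (p : PM S) : iPM f p ≤ iPM g p + c := by
  have hgc : Integrable (fun s => g s + c) (p : Measure S) :=
    (integrable_of_continuous hg p).add (integrable_const c)
  calc iPM f p ≤ ∫ s, (g s + c) ∂(p : Measure S) :=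
        integral_mono (integrable_of_continuous hf p) hgc h
    _ = iPM g p + c := by
        rw [integral_add (integrable_of_continuous hg p) (integrable_const c)]; simp [iPM]

lemma bddAbove_dKR (p q : PM S) :
    BddAbove {r | ∃ f : S → ℝ, LipschitzWith 1 f ∧ r = |iPM f p - iPM f q|} := by
  obtain ⟨s₀⟩ := p.nonempty
  refine ⟨2 * Metric.diam (univ : Set S), ?_⟩
  rintro r ⟨f, hf, rfl⟩
  have hdiam : ∀ s s', f s ≤ f s' + Metric.diam (univ : Set S) := fun s s' =>
    calc f s ≤ f s' + 1 * dist s s' := hf.le_add_mul s s'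
      _ ≤ _ := by
        gcongr
        simpa using Metric.dist_le_diam_of_mem isCompact_univ.isBounded (mem_univ s) (mem_univ s')
  have hc : Continuous fun _ : S => f s₀ := continuous_const
  have h₁ := iPM_le_iPM_add hf.continuous hc (fun s => hdiam s s₀) p
  have h₂ := iPM_le_iPM_add hc hf.continuous (fun s => hdiam s₀ s) p
  have h₃ := iPM_le_iPM_add hf.continuous hc (fun s => hdiam s s₀) q
  have h₄ := iPM_le_iPM_add hc hf.continuous (fun s => hdiam s₀ s) q
  simp only [iPM_const] at h₁ h₂ h₃ h₄
  rw [abs_le]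
  constructor <;> linarith

lemma le_dKR {f : S → ℝ} (hf : LipschitzWith 1 f) (p q : PM S) :
    |iPM f p - iPM f q| ≤ dKR p q :=
  le_csSup (bddAbove_dKR p q) ⟨f, hf, rfl⟩

omit [CompactSpace S] [BorelSpace S] in
lemma dKR_comm (p q : PM S) : dKR p q = dKR q p := by
  simp only [dKR, abs_sub_comm (iPM _ p)]

lemma abs_iPM_sub_iPM_le {f : S → ℝ} {K : ℝ≥0} (hf : LipschitzWith K f) (p q : PM S) :
    |iPM f p - iPM f q| ≤ K * dKR p q := by
  rcases eq_or_ne K 0 with rfl | hK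
  · obtain ⟨s₀⟩ := p.nonempty
    have hconst : f = fun _ => f s₀ :=
      funext fun s => by simpa [dist_le_zero] using hf.dist_le_mul s s₀
    rw [hconst]
    simp
  · have hK' : (0 : ℝ) < K := by positivity
    have hscaled : LipschitzWith 1 fun s => (K : ℝ)⁻¹ * f s := by
      refine LipschitzWith.of_dist_le_mul fun s s' => ?_
      rw [Real.dist_eq, ← mul_sub, abs_mul, abs_inv, NNReal.abs_eq, ← Real.dist_eq,
        NNReal.coe_one, one_mul, inv_mul_le_iff₀ hK']
      exact hf.dist_le_mul s s'
    have hsplit : ∀ m : PM S, iPM f m = K * iPM (fun s => (K : ℝ)⁻¹ * f s) m := fun m => by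
      simp only [iPM, integral_const_mul, mul_inv_cancel_left₀ hK'.ne']
    rw [hsplit p, hsplit q, ← mul_sub, abs_mul, NNReal.abs_eq]
    gcongr
    exact le_dKR hscaled p q

end KantorovichRubinstein

section InfConvolution

variable {X Y : Type*} [PseudoMetricSpace X] [PseudoMetricSpace Y]

def infConv (w : X × Y → ℝ) (L : ℝ≥0) (z : X × Y) : ℝ :=
  ⨅ z' : X × Y, w z' + L * (dist z.1 z'.1 + dist z.2 z'.2)

variable {w : X × Y → ℝ} (L : ℝ≥0)

lemma sub_le_infConv {K : ℝ}
    (hK : ∀ z z' : X × Y, w z - w z' ≤ K + L * (dist z.1 z'.1 + dist z.2 z'.2)) (z : X × Y) :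
    w z - K ≤ infConv w L z :=
  have : Nonempty (X × Y) := ⟨z⟩
  le_ciInf fun z' => by linarith [hK z z']

variable (hw : BddBelow (range w))
include hw

lemma bddBelow_range_infConv (z : X × Y) :
    BddBelow (range fun z' : X × Y => w z' + L * (dist z.1 z'.1 + dist z.2 z'.2)) := by
  obtain ⟨b, hb⟩ := hw
  refine ⟨b, ?_⟩
  rintro _ ⟨z', rfl⟩
  have : 0 ≤ (L : ℝ) * (dist z.1 z'.1 + dist z.2 z'.2) := by positivity
  linarith [hb (mem_range_self z')]

lemma infConv_le (z : X × Y) : infConv w L z ≤ w z := by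
  simpa [infConv] using ciInf_le (bddBelow_range_infConv L hw z) z

lemma infConv_le_add (z z' : X × Y) :
    infConv w L z ≤ infConv w L z' + L * (dist z.1 z'.1 + dist z.2 z'.2) := by
  have : Nonempty (X × Y) := ⟨z⟩
  rw [← sub_le_iff_le_add]
  refine le_ciInf fun z'' => ?_
  have h₁ := ciInf_le (bddBelow_range_infConv L hw z) z''
  have h₂ : dist z.1 z''.1 + dist z.2 z''.2
      ≤ (dist z.1 z'.1 + dist z.2 z'.2) + (dist z'.1 z''.1 + dist z'.2 z''.2) := by
    linarith [dist_triangle z.1 z'.1 z''.1, dist_triangle z.2 z'.2 z''.2]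
  have h₃ := mul_le_mul_of_nonneg_left h₂ L.coe_nonneg
  simp only [infConv] at h₁ ⊢
  linarith

end InfConvolution

section BiaffineExtension

variable {X Y : Type*} [MetricSpace X] [CompactSpace X] [MeasurableSpace X] [BorelSpace X]
  [MetricSpace Y] [CompactSpace Y] [MeasurableSpace Y] [BorelSpace Y]

omit [MeasurableSpace X] [BorelSpace X] in
lemma continuous_iPM_slice {v : X × Y → ℝ} (hv : Continuous v) (q : PM Y) :
    Continuous fun s => iPM (fun t => v (s, t)) q := by
  simpa [iPM] using continuous_parametric_integral_of_continuous
    (f := fun s t => v (s, t)) (μ := (q : Measure Y)) hv isCompact_univ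

lemma iXY_le_iXY_add {v v' : X × Y → ℝ} (hv : Continuous v) (hv' : Continuous v') {c : ℝ}
    (h : ∀ z, v z ≤ v' z + c) (p : PM X) (q : PM Y) : iXY v p q ≤ iXY v' p q + c :=
  iPM_le_iPM_add (continuous_iPM_slice hv q) (continuous_iPM_slice hv' q)
    (fun s => iPM_le_iPM_add (by fun_prop) (by fun_prop) (fun t => h (s, t)) q) p

omit [CompactSpace X] [MeasurableSpace X] [BorelSpace X] in
lemma lipschitzWith_iPM_slice {v : X × Y → ℝ} {L : ℝ≥0}
    (hv : ∀ t, LipschitzWith L fun s => v (s, t)) (hv' : ∀ s, Continuous fun t => v (s, t))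
    (q : PM Y) : LipschitzWith L fun s => iPM (fun t => v (s, t)) q :=
  LipschitzWith.of_le_add_mul L fun s s' =>
    iPM_le_iPM_add (hv' s) (hv' s') (fun t => (hv t).le_add_mul s s') q

lemma iXY_sub_iXY_le {v : X × Y → ℝ} {L : ℝ≥0}
    (hv : ∀ z z' : X × Y, v z ≤ v z' + L * (dist z.1 z'.1 + dist z.2 z'.2))
    (p p' : PM X) (q q' : PM Y) :
    iXY v p q - iXY v p' q' ≤ L * (dKR p p' + dKR q q') := by
  have hx : ∀ t, LipschitzWith L fun s => v (s, t) := fun t =>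
    LipschitzWith.of_le_add_mul L fun s s' => by simpa using hv (s, t) (s', t)
  have hy : ∀ s, LipschitzWith L fun t => v (s, t) := fun s =>
    LipschitzWith.of_le_add_mul L fun t t' => by simpa using hv (s, t) (s, t')
  set A : PM Y → X → ℝ := fun m s => iPM (fun t => v (s, t)) m
  have hA : ∀ m, LipschitzWith L (A m) :=
    lipschitzWith_iPM_slice hx fun s => (hy s).continuous
  have hp : iPM (A q) p - iPM (A q) p' ≤ L * dKR p p' :=
    (le_abs_self _).trans (abs_iPM_sub_iPM_le (hA q) p p')
  have hq : iPM (A q) p' ≤ iPM (A q') p' + L * dKR q q' :=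
    iPM_le_iPM_add (hA q).continuous (hA q').continuous
      (fun s => by linarith [le_abs_self (A q s - A q' s), abs_iPM_sub_iPM_le (hy s) q q']) p'
  change iPM (A q) p - iPM (A q') p' ≤ _
  linarith

lemma iXY_sub_iXY_le_add {w : X × Y → ℝ} (hw : Continuous w) {K : ℝ} {L : ℝ≥0}
    (hK : ∀ z z' : X × Y, w z - w z' ≤ K + L * (dist z.1 z'.1 + dist z.2 z'.2))
    (p p' : PM X) (q q' : PM Y) :
    iXY w p q - iXY w p' q' ≤ K + L * (dKR p p' + dKR q q') := by
  have hbdd : BddBelow (range w) := (isCompact_range hw).bddBelow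
  have hv := infConv_le_add L hbdd
  have hvc : Continuous (infConv w L) := by
    refine (LipschitzWith.of_le_add_mul (2 * L) fun z z' => (hv z z').trans ?_).continuous
    have : dist z.1 z'.1 + dist z.2 z'.2 ≤ 2 * dist z z' := by
      rw [Prod.dist_eq]
      linarith [le_max_left (dist z.1 z'.1) (dist z.2 z'.2),
        le_max_right (dist z.1 z'.1) (dist z.2 z'.2)]
    have := mul_le_mul_of_nonneg_left this L.coe_nonneg
    push_cast
    linarith
  have h₁ : iXY w p q ≤ iXY (infConv w L) p q + K :=
    iXY_le_iXY_add hw hvc (fun z => by linarith [sub_le_infConv L hK z]) p q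
  have h₂ : iXY (infConv w L) p' q' ≤ iXY w p' q' + 0 :=
    iXY_le_iXY_add hvc hw (fun z => by simpa using infConv_le L hbdd z) p' q'
  linarith [iXY_sub_iXY_le hv p p' q q']

end BiaffineExtension

section ConcaveModulus

variable {ω : ℝ → ℝ}

lemma le_add_slope_mul_sub_of_concaveOn (hconc : ConcaveOn ℝ (Ici 0) ω)
    (hmono : MonotoneOn ω (Ici 0)) {a b t : ℝ} (ha : 0 ≤ a) (hab : a < b) (ht : 0 ≤ t) :
    ω t ≤ ω b + slope ω a b * (t - a) := by
  have hb : 0 ≤ b := ha.trans hab.le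
  have hab' : ω a ≤ ω b := hmono ha hb hab.le
  have hL : 0 ≤ slope ω a b := hmono.slope_nonneg ha hb
  rw [slope_def_field] at hL ⊢
  rcases lt_trichotomy t a with hta | rfl | hat
  · have h := hconc.slope_anti_adjacent ht hb hta hab
    rw [le_div_iff₀ (sub_pos.2 hta)] at h
    nlinarith
  · simpa using hab'
  · rcases le_or_gt t b with htb | hbt
    · have := hmono ht hb htb
      nlinarith
    · have h := hconc.slope_anti_adjacent ha ht hab hbt
      rw [div_le_iff₀ (sub_pos.2 hbt)] at h
      nlinarith

lemma tendsto_add_nhdsGT_of_concaveOn (hconc : ConcaveOn ℝ (Ici 0) ω)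
    (hlim : Tendsto ω (𝓝[Ici 0] 0) (𝓝 0)) {δ : ℝ} (hδ : 0 ≤ δ) :
    Tendsto (fun η => ω (δ + η)) (𝓝[>] 0) (𝓝 (ω δ)) := by
  have hcont : ContinuousWithinAt ω (Ici 0) δ := by
    rcases hδ.eq_or_lt with rfl | hδ
    · have h0 : ω 0 = 0 :=
        pure_le_nhds_iff.1 (hlim.mono_left (pure_le_nhdsWithin (mem_Ici.2 le_rfl)))
      rwa [ContinuousWithinAt, h0]
    · have hint : δ ∈ interior (Ici (0 : ℝ)) := by simpa using hδ
      exact ((hconc.continuousOn_interior δ hint).continuousAt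
        (isOpen_interior.mem_nhds hint)).continuousWithinAt
  refine hcont.tendsto.comp (tendsto_nhdsWithin_iff.2 ⟨?_, ?_⟩)
  · exact ((continuous_const_add δ).tendsto' 0 δ (add_zero δ)).mono_left nhdsWithin_le_nhds
  · exact eventually_nhdsWithin_of_forall fun η (hη : 0 < η) => by
      simp only [mem_Ici]; linarith

end ConcaveModulus

section Game

variable {X Y : Type*} [MetricSpace X] [CompactSpace X] [MeasurableSpace X] [BorelSpace X]
  [MetricSpace Y] [CompactSpace Y] [MeasurableSpace Y] [BorelSpace Y]
  (g : StdGame X Y) {lam : ℝ} {w : X × Y → ℝ}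

lemma StdGame.sub_le_of_shapleyEq (hlam : lam ≤ 1) (hw : Continuous w)
    (hsh : ShapleyEq g.G g.L g.u lam w) {K : ℝ} {L : ℝ≥0}
    (hK : ∀ (s s' : X) (t t' : Y), w (s, t) - w (s', t') ≤ K + L * (dist s s' + dist t t'))
    (x x' : X) (y y' : Y) :
    w (x, y) - w (x', y')
      ≤ lam * (g.u (x, y) - g.u (x', y')) + (1 - lam) * (K + L * (dist x x' + dist y y')) := by
  obtain ⟨p, hp, hp_least⟩ := (hsh x y).1.1
  obtain ⟨q', hq', hq'_greatest⟩ := (hsh x' y').2.1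
  obtain ⟨p', hp', hpp'⟩ := g.G_nonexp x x' p hp
  obtain ⟨q, hq, hqq'⟩ := g.L_nonexp y' y q' hq'
  have h₁ : w (x, y) ≤ lam * g.u (x, y) + (1 - lam) * iXY w p q :=
    hp_least.2 (mem_image_of_mem _ hq)
  have h₂ : lam * g.u (x', y') + (1 - lam) * iXY w p' q' ≤ w (x', y') :=
    hq'_greatest.2 (mem_image_of_mem _ hp')
  have h₃ : iXY w p q - iXY w p' q' ≤ K + L * (dist x x' + dist y y') := by
    refine (iXY_sub_iXY_le_add hw (fun z z' => hK z.1 z'.1 z.2 z'.2) p p' q q').trans ?_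
    rw [dKR_comm q, dist_comm y]
    gcongr
  nlinarith [mul_le_mul_of_nonneg_left h₃ (sub_nonneg.2 hlam)]

variable {ω : ℝ → ℝ} (hconc : ConcaveOn ℝ (Ici 0) ω) (hmono : MonotoneOn ω (Ici 0))
  (hlim : Tendsto ω (𝓝[Ici 0] 0) (𝓝 0))
  (hmod : ∀ (x x' : X) (y y' : Y), |g.u (x, y) - g.u (x', y')| ≤ ω (dist x x' + dist y y'))
include hconc hmono hlim hmod

lemma StdGame.sub_le_one_sub_mul_add_of_shapleyEq (hlam₀ : 0 ≤ lam) (hlam₁ : lam ≤ 1)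
    (hw : Continuous w) (hsh : ShapleyEq g.G g.L g.u lam w) {M : ℝ}
    (hM : ∀ (s s' : X) (t t' : Y), w (s, t) - w (s', t') ≤ M + ω (dist s s' + dist t t'))
    (x x' : X) (y y' : Y) :
    w (x, y) - w (x', y') ≤ (1 - lam) * M + ω (dist x x' + dist y y') := by
  set δ := dist x x' + dist y y'
  have hδ : 0 ≤ δ := by positivity
  have hu : lam * (g.u (x, y) - g.u (x', y')) ≤ lam * ω δ :=
    mul_le_mul_of_nonneg_left ((le_abs_self _).trans (hmod x x' y y')) hlam₀
  have hη : ∀ η > 0, w (x, y) - w (x', y') ≤ lam * ω δ + (1 - lam) * (M + ω (δ + η)) := by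
    intro η hη
    set L : ℝ≥0 := ⟨slope ω δ (δ + η), hmono.slope_nonneg hδ (add_nonneg hδ hη.le)⟩
    have hK : ∀ (s s' : X) (t t' : Y),
        w (s, t) - w (s', t') ≤ (M + ω (δ + η) - L * δ) + L * (dist s s' + dist t t') := by
      intro s s' t t'
      have := le_add_slope_mul_sub_of_concaveOn hconc hmono hδ (lt_add_of_pos_right δ hη)
        (by positivity : 0 ≤ dist s s' + dist t t')
      have hL : (L : ℝ) = slope ω δ (δ + η) := rfl
      rw [← hL] at this
      linarith [hM s s' t t']
    have := g.sub_le_of_shapleyEq hlam₁ hw hsh hK x x' y y'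
    linarith
  have hlimη : Tendsto (fun η => lam * ω δ + (1 - lam) * (M + ω (δ + η))) (𝓝[>] 0)
      (𝓝 (lam * ω δ + (1 - lam) * (M + ω δ))) :=
    (((tendsto_add_nhdsGT_of_concaveOn hconc hlim hδ).const_add M).const_mul _).const_add _
  linarith [ge_of_tendsto hlimη (eventually_nhdsWithin_of_forall hη)]

end Game

theorem statement0_general
    {X Y : Type*} [MetricSpace X] [CompactSpace X]
    [MeasurableSpace X] [BorelSpace X]
    [MetricSpace Y] [CompactSpace Y]
    [MeasurableSpace Y] [BorelSpace Y]
    (g : StdGame X Y) (ω : ℝ → ℝ)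
    (hconc : ConcaveOn ℝ (Set.Ici 0) ω)
    (hmono : MonotoneOn ω (Set.Ici 0))
    (hlim : Filter.Tendsto ω (nhdsWithin 0 (Set.Ici 0)) (nhds 0))
    (hmod : ∀ x x' : X, ∀ y y' : Y,
      |g.u (x, y) - g.u (x', y')| ≤ ω (dist x x' + dist y y'))
    (lam : ℝ) (hlam : lam ∈ Set.Ioc (0 : ℝ) 1)
    (w : X × Y → ℝ) (hw : Continuous w) (hsh : ShapleyEq g.G g.L g.u lam w) :
    ∀ x x' : X, ∀ y y' : Y,
      |w (x, y) - w (x', y')| ≤ ω (dist x x' + dist y y') := by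
  intro x x' y y'
  set excess : (X × Y) × (X × Y) → ℝ := fun z =>
    w z.1 - w z.2 - ω (dist z.1.1 z.2.1 + dist z.1.2 z.2.2)
  have hbdd : BddAbove (range excess) := by
    obtain ⟨a, ha⟩ := (isCompact_range hw).bddAbove
    obtain ⟨b, hb⟩ := (isCompact_range hw).bddBelow
    refine ⟨a - b, ?_⟩
    rintro _ ⟨⟨⟨s, t⟩, ⟨s', t'⟩⟩, rfl⟩
    have := (abs_nonneg _).trans (hmod s s' t t')
    linarith [ha (mem_range_self (s, t)), hb (mem_range_self (s', t'))]
  set M := sSup (range excess)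
  have hM : ∀ (s s' : X) (t t' : Y), w (s, t) - w (s', t') ≤ M + ω (dist s s' + dist t t') :=
    fun s s' t t' => by linarith [le_csSup hbdd (mem_range_self ((s, t), (s', t')))]
  have hM₀ : M ≤ 0 := by
    have : M ≤ (1 - lam) * M := csSup_le ⟨_, mem_range_self ((x, y), (x', y'))⟩ <| by
      rintro _ ⟨⟨⟨s, t⟩, ⟨s', t'⟩⟩, rfl⟩
      linarith [g.sub_le_one_sub_mul_add_of_shapleyEq hconc hmono hlim hmod hlam.1.le hlam.2 hw
        hsh hM s s' t t']
    nlinarith [hlam.1]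
  rw [abs_sub_le_iff]
  constructor
  · linarith [hM x x' y y']
  · rw [dist_comm x, dist_comm y]
    linarith [hM x' x y' y]

/-- In a standard gambling game, if ω is a concave nondecreasing modulus of
continuity of u vanishing at 0, then every discounted value v_λ (λ ∈ (0,1]) admits the
same modulus of continuity; in particular the family {v_λ} is equicontinuous. -/
theorem statement0
    {X Y : Type*} [MetricSpace X] [CompactSpace X] [Nonempty X]
    [MeasurableSpace X] [BorelSpace X]
    [MetricSpace Y] [CompactSpace Y] [Nonempty Y]
    [MeasurableSpace Y] [BorelSpace Y]
    (g : StdGame X Y) (ω : ℝ → ℝ)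
    (hconc : ConcaveOn ℝ (Set.Ici 0) ω)
    (hmono : MonotoneOn ω (Set.Ici 0))
    (hlim : Filter.Tendsto ω (nhdsWithin 0 (Set.Ici 0)) (nhds 0))
    (hmod : ∀ x x' : X, ∀ y y' : Y,
      |g.u (x, y) - g.u (x', y')| ≤ ω (dist x x' + dist y y'))
    (lam : ℝ) (hlam : lam ∈ Set.Ioc (0 : ℝ) 1)
    (w : X × Y → ℝ) (hw : Continuous w) (hsh : ShapleyEq g.G g.L g.u lam w) :
    ∀ x x' : X, ∀ y y' : Y,
      |w (x, y) - w (x', y')| ≤ ω (dist x x' + dist y y') :=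
  statement0_general g ω hconc hmono hlim hmod lam hlam w hw hsh

end GG
end
end

section
/- In a standard gambling game, let v: X×Y → ℝ be continuous and excessive. Then for every (x₀,y₀) ∈ X×Y and every p ∈ Γ^∞(x₀), one has ṽ(p,y₀) ≤ v(x₀,y₀). -/
open MeasureTheory Set Filter Topology

noncomputable section
/-!
Fix `y₀` and put `f := v(·, y₀)`, so that `ṽ(p, y₀) = ∫ f dp` and excessiveness gives
`∫ f dq ≤ f x` for `q ∈ Γ x`. The pairs `(p, q)` with `∫ f dq ≤ ∫ f dp` form a set that is
closed (`f` is bounded continuous, so `p ↦ ∫ f dp` is weak-* continuous) and convex (the integral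
is affine in the measure), and it contains the graph of `Γ`; so it contains the graph of `Γ̃`.
Hence `∫ f` does not increase along the iterates `Γ̃ⁿ(δ_x)`, and by closedness the bound
`∫ f dp ≤ f x` passes to the closure `Γ^∞(x)`.
-/

namespace GG

open BoundedContinuousFunction

section Mixtures

variable {S : Type*} [MeasurableSpace S]

theorem iPM_dirac [MeasurableSingletonClass S] (f : S → ℝ) (x : S) : iPM f (dirac x) = f x :=
  integral_dirac f x

theorem iPM_eq_of_isMix {f : S → ℝ} {t : NNReal} {p q r : PM S}
    (hp : Integrable f (p : Measure S)) (hq : Integrable f (q : Measure S)) (ht : t ≤ 1)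
    (h : IsMix t p q r) : iPM f r = t * iPM f p + (1 - t) * iPM f q := by
  have hsub : ((1 : ENNReal) - t).toReal = 1 - t := by
    rw [ENNReal.toReal_sub_of_le (by exact_mod_cast ht) ENNReal.one_ne_top]
    simp
  unfold iPM
  rw [h, integral_add_measure (hp.smul_measure ENNReal.coe_ne_top)
      (hq.smul_measure (ENNReal.sub_ne_top ENNReal.one_ne_top)),
    integral_smul_measure, integral_smul_measure, hsub]
  simp only [ENNReal.coe_toReal, smul_eq_mul]

theorem pmConvex2_setOf_iPM_le {f : S → ℝ} (hf : ∀ p : PM S, Integrable f (p : Measure S)) :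
    PMConvex2 {z : PM S × PM S | iPM f z.2 ≤ iPM f z.1} := by
  intro a ha b hb t ht c hc₁ hc₂
  have ht' : (t : ℝ) ≤ 1 := by exact_mod_cast ht
  rw [mem_ofPred_eq, iPM_eq_of_isMix (hf _) (hf _) ht hc₁,
    iPM_eq_of_isMix (hf _) (hf _) ht hc₂]
  exact add_le_add (mul_le_mul_of_nonneg_left ha t.2)
    (mul_le_mul_of_nonneg_left hb (sub_nonneg.2 ht'))

end Mixtures

section Reachable

variable {S : Type*} [MeasurableSpace S] [TopologicalSpace S] [OpensMeasurableSpace S]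
  {Γ : S → Set (PM S)}

theorem tGraph_subset_of_isClosed {T : Set (PM S × PM S)} (hT : IsClosed T)
    (hTconv : PMConvex2 T) (hΓ : ∀ x, ∀ q ∈ Γ x, (dirac x, q) ∈ T) : tGraph Γ ⊆ T := by
  refine closure_minimal (sInter_subset_of_mem ⟨?_, hTconv⟩) hT
  rintro ⟨_, q⟩ ⟨x, rfl, hq⟩
  exact hΓ x q hq

theorem continuous_iPM (f : S →ᵇ ℝ) : Continuous (iPM f) :=
  ProbabilityMeasure.continuous_integral_boundedContinuousFunction f

variable [MeasurableSingletonClass S]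

theorem iPM_le_of_mem_tGraph (f : S →ᵇ ℝ) (hf : ∀ x, ∀ q ∈ Γ x, iPM f q ≤ f x) {p q : PM S}
    (h : (p, q) ∈ tGraph Γ) : iPM f q ≤ iPM f p := by
  refine tGraph_subset_of_isClosed (T := {z | iPM f z.2 ≤ iPM f z.1}) ?_
    (pmConvex2_setOf_iPM_le fun p => f.integrable _) (fun x q hq => ?_) h
  · exact isClosed_le ((continuous_iPM f).comp continuous_snd)
      ((continuous_iPM f).comp continuous_fst)
  · simpa only [mem_ofPred_eq, iPM_dirac] using hf x q hq

theorem iPM_le_of_mem_tIter (f : S →ᵇ ℝ) (hf : ∀ x, ∀ q ∈ Γ x, iPM f q ≤ f x) {n : ℕ}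
    {p q : PM S} (h : q ∈ tIter Γ n p) : iPM f q ≤ iPM f p := by
  induction n generalizing p with
  | zero => rw [show q = p from h]
  | succ n ih =>
    obtain ⟨r, hr, hq⟩ := h
    exact (ih hq).trans (iPM_le_of_mem_tGraph f hf hr)

theorem iPM_le_of_mem_reach (f : S →ᵇ ℝ) (hf : ∀ x, ∀ q ∈ Γ x, iPM f q ≤ f x) {x : S}
    {p : PM S} (h : p ∈ reach Γ x) : iPM f p ≤ f x := by
  refine closure_minimal (fun q hq => ?_) (isClosed_le (continuous_iPM f) continuous_const) h
  obtain ⟨n, hn⟩ := mem_iUnion.mp hq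
  simpa only [mem_ofPred_eq, iPM_dirac] using iPM_le_of_mem_tIter f hf hn

end Reachable

theorem iXY_dirac_right {X Y : Type*} [MeasurableSpace X] [MeasurableSpace Y]
    [MeasurableSingletonClass Y] (v : X × Y → ℝ) (p : PM X) (y : Y) :
    iXY v p (dirac y) = iPM (fun x => v (x, y)) p := by
  simp only [iXY, iPM, dirac, ProbabilityMeasure.coe_mk, integral_dirac]

theorem statement7_general
    {X Y : Type*} [MetricSpace X] [CompactSpace X]
    [MeasurableSpace X] [BorelSpace X]
    [MetricSpace Y]
    [MeasurableSpace Y] [BorelSpace Y]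
    (g : StdGame X Y)
    (v : X × Y → ℝ) (hv : Continuous v) (hex : Excessive g.G v)
    (x0 : X) (y0 : Y) (p : PM X) (hp : p ∈ reach g.G x0) :
    iXY v p (dirac y0) ≤ v (x0, y0) := by
  let V : X →ᵇ ℝ := mkOfCompact ⟨fun x => v (x, y0), by fun_prop⟩
  have hV : ∀ x, ∀ q ∈ g.G x, iPM V q ≤ V x := fun x q hq =>
    (iXY_dirac_right v q y0).symm.trans_le ((hex x y0).2 ⟨q, hq, rfl⟩)
  exact (iXY_dirac_right v p y0).trans_le (iPM_le_of_mem_reach V hV hp)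

/-- if v is continuous and excessive then for every state (x0,y0) and every
p in the reachable set of Player 1 from x0, one has v(p,y0) <= v(x0,y0). -/
theorem statement7
    {X Y : Type*} [MetricSpace X] [CompactSpace X] [Nonempty X]
    [MeasurableSpace X] [BorelSpace X]
    [MetricSpace Y] [CompactSpace Y] [Nonempty Y]
    [MeasurableSpace Y] [BorelSpace Y]
    (g : StdGame X Y)
    (v : X × Y → ℝ) (hv : Continuous v) (hex : Excessive g.G v)
    (x0 : X) (y0 : Y) (p : PM X) (hp : p ∈ reach g.G x0) :
    iXY v p (dirac y0) ≤ v (x0, y0) :=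
  statement7_general g v hv hex x0 y0 p hp

end GG
end
end
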